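/- Let G be a graph and u, v non-adjacent vertices, and let Z_{u,v}(G) be the graph obtained by replacing u with a twin of v. Then the clique number of Z_{u,v}(G) equals the clique number of G with the vertex u deleted. -/

import Mathlib

/-! Outside `u`, the graphs `zykov G u v` and `G` coincide, so `G - u` is an induced subgraph of
`zykov G u v`. Conversely, sending `u` to `v` is a homomorphism `zykov G u v →g G - u`, since the
new neighbours of `u` are exactly the neighbours of `v`, and a homomorphism cannot decrease the
clique number. -/

/-- Zykov symmetrization: replace `u` with a twin of `v` (delete all edges at `u`,
join `u` to exactly the neighbours of `v`). -/
def zykov {V : Type*} (G : SimpleGraph V) (u v : V) : SimpleGraph V where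
  Adj x y := x ≠ y ∧
    ((x ≠ u ∧ y ≠ u ∧ G.Adj x y) ∨ (x = u ∧ G.Adj v y) ∨ (y = u ∧ G.Adj v x))
  symm := ⟨by
    rintro x y ⟨hxy, h⟩
    refine ⟨hxy.symm, ?_⟩
    rcases h with ⟨hx, hy, h⟩ | ⟨hx, h⟩ | ⟨hy, h⟩
    · exact Or.inl ⟨hy, hx, h.symm⟩
    · exact Or.inr (Or.inr ⟨hx, h⟩)
    · exact Or.inr (Or.inl ⟨hy, h⟩)⟩
  loopless := ⟨fun x h => h.1 rfl⟩

namespace SimpleGraph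

variable {α β : Type*} {G : SimpleGraph α} {H : SimpleGraph β}

/-- Adjacent vertices have distinct images, so a homomorphism is injective on every clique. -/
theorem Hom.cliqueNum_le [Finite β] (f : G →g H) : G.cliqueNum ≤ H.cliqueNum := by
  classical
  obtain ⟨s, hs⟩ := G.exists_isNClique_cliqueNum
  have hinj : Set.InjOn f s := fun x hx y hy hxy ↦
    by_contra fun hne ↦ H.ne_of_adj (f.map_adj (hs.isClique hx hy hne)) hxy
  have hclique : H.IsClique (s.image f : Set β) := by
    rw [Finset.coe_image]
    rintro _ ⟨x, hx, rfl⟩ _ ⟨y, hy, rfl⟩ hne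
    exact f.map_adj (hs.isClique hx hy (ne_of_apply_ne f hne))
  calc G.cliqueNum = (s.image f).card := by rw [Finset.card_image_of_injOn hinj, hs.card_eq]
    _ ≤ H.cliqueNum := hclique.card_le_cliqueNum

end SimpleGraph

section Zykov

variable {V : Type*} (G : SimpleGraph V) (u v : V)

theorem zykov_induce_compl_singleton : (zykov G u v).induce {u}ᶜ = G.induce {u}ᶜ := by
  ext ⟨x, hx⟩ ⟨y, hy⟩
  rw [Set.mem_compl_singleton_iff] at hx hy
  simpa [zykov, hx, hy] using G.ne_of_adj

open Classical in
noncomputable def zykovFold (huv : u ≠ v) : zykov G u v →g G.induce {u}ᶜ where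
  toFun x := if hx : x = u then ⟨v, huv.symm⟩ else ⟨x, hx⟩
  map_rel' := by
    rintro x y ⟨hxy, ⟨hx, hy, h⟩ | ⟨rfl, h⟩ | ⟨rfl, h⟩⟩
    · simp [hx, hy, h]
    · simp [hxy.symm, h]
    · simp [hxy, h.symm]

end Zykov

theorem zykov_cliqueNum_eq_delete_general {V : Type*} [Fintype V] (G : SimpleGraph V) (u v : V)
    (huv : u ≠ v) :
    (zykov G u v).cliqueNum = (G.induce ({u}ᶜ : Set V)).cliqueNum :=
  le_antisymm (zykovFold G u v huv).cliqueNum_le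
    (zykov_induce_compl_singleton G u v ▸ SimpleGraph.cliqueNum_induce_le _)

theorem zykov_cliqueNum_eq_delete {V : Type*} [Fintype V] (G : SimpleGraph V) (u v : V)
    (huv : u ≠ v) (hna : ¬ G.Adj u v) :
    (zykov G u v).cliqueNum = (G.induce ({u}ᶜ : Set V)).cliqueNum :=
  zykov_cliqueNum_eq_delete_general G u v huv
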